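/- arXiv:1304.1588 — 2 statements merged into one kernel-verified Lean document; each statement's English description precedes it below -/
import Mathlib

section
/- Assume κ_1 μ_1 + κ_2 μ_2 = κ_3 conj(μ_3) with κ_1, κ_2, κ_3 > 0 and Im λ_j < 0 for j = 1,2,3. Then there exist positive constants C* and C_* such that −C* ν_A(z)³ ≤ Im⟨F(z), Az⟩_{ℂ³} ≤ −C_* ν_A(z)³ for all z ∈ ℂ³. -/
open MeasureTheory Filter Complex

noncomputable section

/-- The underlying space `ℝ²`. -/
abbrev V2 : Type := EuclideanSpace ℝ (Fin 2)

/-- Fourier transform on `ℝ²` with the normalization `f̂(ξ) = (2π)⁻¹ ∫ e^{-iy·ξ} f(y) dy`. -/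
def FT (f : V2 → ℂ) (ξ : V2) : ℂ :=
  (2 * Real.pi : ℂ)⁻¹ * ∫ y : V2, Complex.exp (-Complex.I * ((inner ℝ y ξ : ℝ) : ℂ)) * f y

/-- Inverse Fourier transform on `ℝ²`. -/
def FTinv (f : V2 → ℂ) (x : V2) : ℂ :=
  (2 * Real.pi : ℂ)⁻¹ * ∫ ξ : V2, Complex.exp (Complex.I * ((inner ℝ x ξ : ℝ) : ℂ)) * f ξ

/-- The `L²(ℝ²)` norm. -/
def L2N (f : V2 → ℂ) : ℝ := (eLpNorm f 2 volume).toReal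

/-- The `L³(ℝ²)` norm. -/
def L3N (f : V2 → ℂ) : ℝ := (eLpNorm f 3 volume).toReal

/-- The `L^∞(ℝ²)` norm of a `ℂ³`-valued function. -/
def LinfN (f : V2 → Fin 3 → ℂ) : ℝ := (eLpNorm f ⊤ volume).toReal

/-- The function `ξ ↦ (1+|ξ|²)^{s/2} f̂(ξ)`, i.e. the Fourier side of `(1-Δ)^{s/2} f`. -/
def sobFn (s : ℝ) (f : V2 → ℂ) : V2 → ℂ :=
  fun ξ => (((1 + ‖ξ‖ ^ 2) ^ (s / 2) : ℝ) : ℂ) * FT f ξ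

/-- The function `x ↦ (1+|x|²)^{s/2} f(x)`. -/
def wFn (s : ℝ) (f : V2 → ℂ) : V2 → ℂ :=
  fun x => (((1 + ‖x‖ ^ 2) ^ (s / 2) : ℝ) : ℂ) * f x

/-- The `H^{s,0}(ℝ²)` norm (via the Fourier transform). -/
def sobNorm (s : ℝ) (f : V2 → ℂ) : ℝ := L2N (sobFn s f)

/-- The `H^{0,s}(ℝ²)` norm. -/
def wNorm (s : ℝ) (f : V2 → ℂ) : ℝ := L2N (wFn s f)

/-- Membership in `H^{s,0}(ℝ²)`. -/
def MemSob (s : ℝ) (f : V2 → ℂ) : Prop := MemLp (sobFn s f) 2 volume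

/-- Membership in `H^{0,s}(ℝ²)`. -/
def MemW (s : ℝ) (f : V2 → ℂ) : Prop := MemLp (wFn s f) 2 volume

/-- Componentwise `H^{s,0}` norm of a `ℂ³`-valued function. -/
def sobNormS (s : ℝ) (f : V2 → Fin 3 → ℂ) : ℝ := ∑ j, sobNorm s (fun x => f x j)

/-- Componentwise `H^{0,s}` norm of a `ℂ³`-valued function. -/
def wNormS (s : ℝ) (f : V2 → Fin 3 → ℂ) : ℝ := ∑ j, wNorm s (fun x => f x j)

/-- Componentwise membership in `H^{s,0}`. -/
def MemSobS (s : ℝ) (f : V2 → Fin 3 → ℂ) : Prop := ∀ j, MemSob s (fun x => f x j)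

/-- Componentwise membership in `H^{0,s}`. -/
def MemWS (s : ℝ) (f : V2 → Fin 3 → ℂ) : Prop := ∀ j, MemW s (fun x => f x j)

/-- The norm `‖f‖_{H^{s,0}} + ‖f‖_{H^{0,s}}`. -/
def HN (s : ℝ) (f : V2 → Fin 3 → ℂ) : ℝ := sobNormS s f + wNormS s f

/-- The quadratic nonlinearity `F : ℂ³ → ℂ³` of the system. -/
def Fnl (l μ : Fin 3 → ℂ) (z : Fin 3 → ℂ) : Fin 3 → ℂ :=
  ![l 0 * ((‖z 0‖ : ℝ) : ℂ) * z 0 + μ 0 * (starRingEnd ℂ) (z 1) * z 2,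
    l 1 * ((‖z 1‖ : ℝ) : ℂ) * z 1 + μ 1 * (starRingEnd ℂ) (z 0) * z 2,
    l 2 * ((‖z 2‖ : ℝ) : ℂ) * z 2 + μ 2 * z 0 * z 1]

/-- The standard Hermitian inner product `⟨z,w⟩ = Σ z_j conj(w_j)` on `ℂ³`. -/
def innC3 (z w : Fin 3 → ℂ) : ℂ := ∑ j, z j * (starRingEnd ℂ) (w j)

/-- Multiplication by the diagonal matrix `A = diag(κ₁,κ₂,κ₃)`. -/
def Amul (κ : Fin 3 → ℝ) (z : Fin 3 → ℂ) : Fin 3 → ℂ := fun j => (κ j : ℂ) * z j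

/-- `ν_A(z) = sqrt(κ₁|z₁|² + κ₂|z₂|² + κ₃|z₃|²)`. -/
def nuA (κ : Fin 3 → ℝ) (z : Fin 3 → ℂ) : ℝ :=
  Real.sqrt (∑ j, κ j * ‖z j‖ ^ 2)

/-- The free propagator `exp(i t Δ/(2m))` (as a Fourier multiplier). -/
def prop1 (mass t : ℝ) (f : V2 → ℂ) : V2 → ℂ :=
  FTinv fun ξ =>
    Complex.exp (-Complex.I * (t : ℂ) * ((‖ξ‖ ^ 2 : ℝ) : ℂ) / (2 * (mass : ℂ))) * FT f ξ

/-- The free propagator `U(t) = (exp(itΔ/(2m_j)))_{j=1,2,3}` for the system. -/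
def Uprop (m : Fin 3 → ℝ) (t : ℝ) (f : V2 → Fin 3 → ℂ) : V2 → Fin 3 → ℂ :=
  fun x j => prop1 (m j) t (fun y => f y j) x

/-- The operator `(Gφ)(ξ) = (−i m_j φ̂_j(m_j ξ))_{j=1,2,3}`. -/
def Gop (m : Fin 3 → ℝ) (f : V2 → Fin 3 → ℂ) : V2 → Fin 3 → ℂ :=
  fun ξ j => -Complex.I * ((m j : ℝ) : ℂ) * FT (fun y => f y j) ((m j) • ξ)

/-- The Laplacian on `ℝ²`. -/
def lap (f : V2 → ℂ) (x : V2) : ℂ :=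
  ∑ i : Fin 2,
    iteratedFDeriv ℝ 2 f x ![EuclideanSpace.single i (1 : ℝ), EuclideanSpace.single i 1]

/-- `u` satisfies the system `i ∂_t u_j + (1/(2m_j)) Δ u_j = F_j(u)` at time `t`. -/
def SolEq (m : Fin 3 → ℝ) (l μ : Fin 3 → ℂ) (u : ℝ → V2 → Fin 3 → ℂ) (t : ℝ) : Prop :=
  ∀ x : V2, ∀ j : Fin 3,
    Complex.I * deriv (fun τ => u τ x j) t
        + (1 / (2 * ((m j : ℝ) : ℂ))) * lap (fun y => u t y j) x
      = Fnl l μ (u t x) j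

/-- `u` is a solution of the initial value problem on `[0,T]`, belonging to
`C([0,T]; H^{s,0} ∩ H^{0,s})`. -/
def IsSolOn (m : Fin 3 → ℝ) (l μ : Fin 3 → ℂ) (s : ℝ) (φ : V2 → Fin 3 → ℂ)
    (T : ℝ) (u : ℝ → V2 → Fin 3 → ℂ) : Prop :=
  (∀ x, u 0 x = φ x) ∧
  (∀ t ∈ Set.Icc (0 : ℝ) T, MemSobS s (u t) ∧ MemWS s (u t)) ∧
  (∀ t₀ ∈ Set.Icc (0 : ℝ) T,
    Filter.Tendsto (fun t => HN s fun x j => u t x j - u t₀ x j)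
      (nhdsWithin t₀ (Set.Icc 0 T)) (nhds 0)) ∧
  (∀ t ∈ Set.Ioo (0 : ℝ) T, SolEq m l μ u t)

/-- `u` is a global solution of the initial value problem, belonging to
`C([0,∞); H^{s,0} ∩ H^{0,s})`. -/
def IsGlobalSol (m : Fin 3 → ℝ) (l μ : Fin 3 → ℂ) (s : ℝ) (φ : V2 → Fin 3 → ℂ)
    (u : ℝ → V2 → Fin 3 → ℂ) : Prop :=
  (∀ x, u 0 x = φ x) ∧
  (∀ t ∈ Set.Ici (0 : ℝ), MemSobS s (u t) ∧ MemWS s (u t)) ∧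
  (∀ t₀ ∈ Set.Ici (0 : ℝ),
    Filter.Tendsto (fun t => HN s fun x j => u t x j - u t₀ x j)
      (nhdsWithin t₀ (Set.Ici 0)) (nhds 0)) ∧
  (∀ t ∈ Set.Ioi (0 : ℝ), SolEq m l μ u t)

/-- The norm `‖u‖_{X_T}`. -/
def XTnorm (m : Fin 3 → ℝ) (s γ T : ℝ) (u : ℝ → V2 → Fin 3 → ℂ) : ℝ :=
  ⨆ t : Set.Icc (0 : ℝ) T,
    ((1 + (t : ℝ)) * LinfN (u (t : ℝ)) +
      (1 + (t : ℝ)) ^ (-(γ / 3)) *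
        (sobNormS s (u (t : ℝ)) + wNormS s (Uprop m (-(t : ℝ)) (u (t : ℝ)))))

/-- `E_θ z = (e^{i m_j θ} z_j)_{j=1,2,3}`. -/
def Eop (m : Fin 3 → ℝ) (θ : ℝ) (z : Fin 3 → ℂ) : Fin 3 → ℂ :=
  fun j => Complex.exp (Complex.I * ((m j * θ : ℝ) : ℂ)) * z j

/-- `M(t)φ = (e^{i m_j |x|²/(2t)} φ_j)_{j=1,2,3}`. -/
def Mop (m : Fin 3 → ℝ) (t : ℝ) (f : V2 → Fin 3 → ℂ) : V2 → Fin 3 → ℂ :=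
  fun x j => Complex.exp (Complex.I * ((m j * ‖x‖ ^ 2 / (2 * t) : ℝ) : ℂ)) * f x j

/-- `(D(t)φ)(x) = t⁻¹ φ(x/t)`. -/
def Dop (t : ℝ) (f : V2 → Fin 3 → ℂ) : V2 → Fin 3 → ℂ :=
  fun x j => ((t : ℝ) : ℂ)⁻¹ * f (t⁻¹ • x) j

/-- The inverse `G⁻¹` of the operator `G`. -/
def Ginv (m : Fin 3 → ℝ) (f : V2 → Fin 3 → ℂ) : V2 → Fin 3 → ℂ :=
  fun x j => FTinv (fun η => (Complex.I / ((m j : ℝ) : ℂ)) * f ((m j)⁻¹ • η) j) x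

/-- `W(t) = G M(t) G⁻¹`. -/
def Wop (m : Fin 3 → ℝ) (t : ℝ) (f : V2 → Fin 3 → ℂ) : V2 → Fin 3 → ℂ :=
  Gop m (Mop m t (Ginv m f))

end

/-! The resonance condition `κ₁μ₁ + κ₂μ₂ = κ₃ conj μ₃` collects the coupling terms of
`⟨F(z), Az⟩` into `w + conj w`, which is real. Hence `Im⟨F(z), Az⟩ = -∑ cⱼ xⱼ³` with
`xⱼ = √κⱼ |zⱼ| ≥ 0`, `cⱼ = -Im λⱼ / √κⱼ > 0` and `ν_A(z) = ‖x‖₂`, and both bounds follow from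
the comparison `‖x‖₃³ ≤ ‖x‖₂³ ≤ √n ‖x‖₃³` on `ℝⁿ`, each half of which is Cauchy–Schwarz. -/

open Finset

section PowerSums

variable {ι R : Type*} [CommRing R] [LinearOrder R] [IsStrictOrderedRing R] (s : Finset ι)
  {x : ι → R}

theorem sq_sum_pow_three_le_sum_sq_pow_three :
    (∑ i ∈ s, x i ^ 3) ^ 2 ≤ (∑ i ∈ s, x i ^ 2) ^ 3 :=
  calc (∑ i ∈ s, x i ^ 3) ^ 2 ≤ (∑ i ∈ s, x i ^ 2) * ∑ i ∈ s, (x i ^ 2) ^ 2 :=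
        sum_sq_le_sum_mul_sum_of_sq_le_mul s (fun i _ => sq_nonneg _) (fun i _ => sq_nonneg _)
          fun i _ => le_of_eq (by ring)
    _ ≤ (∑ i ∈ s, x i ^ 2) * (∑ i ∈ s, x i ^ 2) ^ 2 := by
        gcongr
        exact sum_sq_le_sq_sum_of_nonneg fun i _ => sq_nonneg _
    _ = (∑ i ∈ s, x i ^ 2) ^ 3 := by ring

theorem sum_sq_pow_three_le_card_mul_sq_sum_pow_three (hx : ∀ i ∈ s, 0 ≤ x i) :
    (∑ i ∈ s, x i ^ 2) ^ 3 ≤ #s * (∑ i ∈ s, x i ^ 3) ^ 2 := by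
  set S := ∑ i ∈ s, x i ^ 2
  have hS : 0 ≤ S := sum_nonneg fun i _ => sq_nonneg _
  have hCS : S ^ 2 ≤ (∑ i ∈ s, x i) * ∑ i ∈ s, x i ^ 3 :=
    sum_sq_le_sum_mul_sum_of_sq_le_mul s hx (fun i hi => pow_nonneg (hx i hi) 3)
      fun i _ => le_of_eq (by ring)
  have key : S * S ^ 3 ≤ S * (#s * (∑ i ∈ s, x i ^ 3) ^ 2) :=
    calc S * S ^ 3 = (S ^ 2) ^ 2 := by ring
      _ ≤ ((∑ i ∈ s, x i) * ∑ i ∈ s, x i ^ 3) ^ 2 := pow_le_pow_left₀ (sq_nonneg S) hCS 2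
      _ = (∑ i ∈ s, x i) ^ 2 * (∑ i ∈ s, x i ^ 3) ^ 2 := by ring
      _ ≤ (#s * S) * (∑ i ∈ s, x i ^ 3) ^ 2 := by gcongr; exact sq_sum_le_card_mul_sum_sq
      _ = S * (#s * (∑ i ∈ s, x i ^ 3) ^ 2) := by ring
  rcases hS.eq_or_lt with hS0 | hSpos
  · rw [← hS0, zero_pow three_ne_zero]; positivity
  · exact le_of_mul_le_mul_left key hSpos

end PowerSums

section SqrtPowerSums

variable {ι : Type*} (s : Finset ι) {x : ι → ℝ}

theorem sum_pow_three_le_sqrt_sum_sq_pow_three :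
    ∑ i ∈ s, x i ^ 3 ≤ √(∑ i ∈ s, x i ^ 2) ^ 3 := by
  refine (abs_le_of_sq_le_sq' ?_ (by positivity)).2
  rw [← pow_mul, mul_comm, pow_mul, Real.sq_sqrt (sum_nonneg fun i _ => sq_nonneg _)]
  exact sq_sum_pow_three_le_sum_sq_pow_three s

theorem sqrt_sum_sq_pow_three_le_sqrt_card_mul_sum_pow_three (hx : ∀ i ∈ s, 0 ≤ x i) :
    √(∑ i ∈ s, x i ^ 2) ^ 3 ≤ √(#s : ℝ) * ∑ i ∈ s, x i ^ 3 := by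
  have hcube : 0 ≤ ∑ i ∈ s, x i ^ 3 := sum_nonneg fun i hi => pow_nonneg (hx i hi) 3
  refine (pow_le_pow_iff_left₀ (by positivity) (mul_nonneg (Real.sqrt_nonneg _) hcube)
    two_ne_zero).1 ?_
  rw [← pow_mul, mul_comm, pow_mul, Real.sq_sqrt (sum_nonneg fun i _ => sq_nonneg _), mul_pow,
    Real.sq_sqrt (Nat.cast_nonneg _)]
  exact sum_sq_pow_three_le_card_mul_sq_sum_pow_three s hx

end SqrtPowerSums

section WeightedCubes

variable {ι : Type*} [Fintype ι] [Nonempty ι] {c : ι → ℝ}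

theorem exists_pos_sum_mul_pow_three_le (hc : ∀ i, 0 < c i) :
    ∃ C, 0 < C ∧ ∀ x : ι → ℝ, (∀ i, 0 ≤ x i) →
      ∑ i, c i * x i ^ 3 ≤ C * √(∑ i, x i ^ 2) ^ 3 := by
  obtain ⟨i₀, hi₀⟩ := Finite.exists_max c
  refine ⟨c i₀, hc i₀, fun x hx => ?_⟩
  calc ∑ i, c i * x i ^ 3 ≤ ∑ i, c i₀ * x i ^ 3 := by
        gcongr with i; exacts [pow_nonneg (hx i) 3, hi₀ i]
    _ = c i₀ * ∑ i, x i ^ 3 := (mul_sum ..).symm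
    _ ≤ c i₀ * √(∑ i, x i ^ 2) ^ 3 := by
        gcongr; · exact (hc i₀).le
        exact sum_pow_three_le_sqrt_sum_sq_pow_three _

theorem exists_pos_mul_sqrt_sum_sq_pow_three_le (hc : ∀ i, 0 < c i) :
    ∃ C, 0 < C ∧ ∀ x : ι → ℝ, (∀ i, 0 ≤ x i) →
      C * √(∑ i, x i ^ 2) ^ 3 ≤ ∑ i, c i * x i ^ 3 := by
  obtain ⟨i₀, hi₀⟩ := Finite.exists_min c
  have hcard : 0 < √(Fintype.card ι : ℝ) := by simp [Fintype.card_pos]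
  refine ⟨c i₀ / √(Fintype.card ι : ℝ), div_pos (hc i₀) hcard, fun x hx => ?_⟩
  calc c i₀ / √(Fintype.card ι : ℝ) * √(∑ i, x i ^ 2) ^ 3
        ≤ c i₀ / √(Fintype.card ι : ℝ) * (√(Fintype.card ι : ℝ) * ∑ i, x i ^ 3) := by
        gcongr; · exact (div_pos (hc i₀) hcard).le
        exact sqrt_sum_sq_pow_three_le_sqrt_card_mul_sum_pow_three _ fun i _ => hx i
    _ = ∑ i, c i₀ * x i ^ 3 := by rw [← mul_sum]; field_simp
    _ ≤ ∑ i, c i * x i ^ 3 := by gcongr with i; exacts [pow_nonneg (hx i) 3, hi₀ i]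

end WeightedCubes

theorem im_innC3_Fnl_Amul {l μ : Fin 3 → ℂ} {κ : Fin 3 → ℝ}
    (hcoef : (κ 0 : ℂ) * μ 0 + (κ 1 : ℂ) * μ 1 = (κ 2 : ℂ) * (starRingEnd ℂ) (μ 2))
    (z : Fin 3 → ℂ) :
    (innC3 (Fnl l μ z) (Amul κ z)).im = ∑ j, κ j * (l j).im * ‖z j‖ ^ 3 := by
  set w := (κ 2 : ℂ) * μ 2 * z 0 * z 1 * (starRingEnd ℂ) (z 2)
  have hsplit : innC3 (Fnl l μ z) (Amul κ z) =
      ∑ j, ((κ j * ‖z j‖ ^ 3 : ℝ) : ℂ) * l j + (w + (starRingEnd ℂ) w) := by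
    simp only [innC3, Fnl, Amul, w, Fin.sum_univ_three, Matrix.cons_val_zero,
      Matrix.cons_val_one, Matrix.head_cons, Matrix.cons_val_two, Matrix.tail_cons,
      map_mul, Complex.conj_ofReal, Complex.conj_conj]
    push_cast
    linear_combination (κ 0 * l 0 * ‖z 0‖ : ℂ) * Complex.mul_conj' (z 0) +
      (κ 1 * l 1 * ‖z 1‖ : ℂ) * Complex.mul_conj' (z 1) +
      (κ 2 * l 2 * ‖z 2‖ : ℂ) * Complex.mul_conj' (z 2) +
      ((starRingEnd ℂ) (z 0) * (starRingEnd ℂ) (z 1) * z 2) * hcoef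
  rw [hsplit, Complex.add_conj]
  simp only [Complex.add_im, Complex.ofReal_im, add_zero, Complex.im_sum, Complex.im_ofReal_mul]
  exact sum_congr rfl fun j _ => by ring

theorem nuA_eq_sqrt_sum_sq {κ : Fin 3 → ℝ} (hκ : ∀ j, 0 ≤ κ j) (z : Fin 3 → ℂ) :
    nuA κ z = √(∑ j, (√(κ j) * ‖z j‖) ^ 2) := by
  unfold nuA
  congr 1
  exact sum_congr rfl fun j _ => by rw [mul_pow, Real.sq_sqrt (hκ j)]

theorem strict_dissipativity_bounds_general
    (l μ : Fin 3 → ℂ) (κ : Fin 3 → ℝ)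
    (hdiss : ∀ j, (l j).im < 0)
    (hκ : ∀ j, 0 < κ j)
    (hcoef : (κ 0 : ℂ) * μ 0 + (κ 1 : ℂ) * μ 1 = (κ 2 : ℂ) * (starRingEnd ℂ) (μ 2)) :
    ∃ Cstar : ℝ, 0 < Cstar ∧ ∃ Clow : ℝ, 0 < Clow ∧
      ∀ z : Fin 3 → ℂ,
        -Cstar * nuA κ z ^ 3 ≤ (innC3 (Fnl l μ z) (Amul κ z)).im ∧
        (innC3 (Fnl l μ z) (Amul κ z)).im ≤ -Clow * nuA κ z ^ 3 := by
  set c : Fin 3 → ℝ := fun j => -(l j).im / √(κ j)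
  have hc : ∀ j, 0 < c j := fun j => div_pos (neg_pos.2 (hdiss j)) (Real.sqrt_pos.2 (hκ j))
  obtain ⟨Cstar, hCstar, hupper⟩ := exists_pos_sum_mul_pow_three_le hc
  obtain ⟨Clow, hClow, hlower⟩ := exists_pos_mul_sqrt_sum_sq_pow_three_le hc
  refine ⟨Cstar, hCstar, Clow, hClow, fun z => ?_⟩
  set x : Fin 3 → ℝ := fun j => √(κ j) * ‖z j‖
  have hx : ∀ j, 0 ≤ x j := fun j => by positivity
  have him : (innC3 (Fnl l μ z) (Amul κ z)).im = -∑ j, c j * x j ^ 3 := by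
    rw [im_innC3_Fnl_Amul hcoef, ← sum_neg_distrib]
    refine sum_congr rfl fun j _ => ?_
    have hsqrt : √(κ j) ^ 2 = κ j := Real.sq_sqrt (hκ j).le
    have hsqrt_pos : 0 < √(κ j) := Real.sqrt_pos.2 (hκ j)
    simp only [c, x]
    field_simp
    rw [hsqrt]
    ring
  rw [him, nuA_eq_sqrt_sum_sq fun j => (hκ j).le]
  exact ⟨by linarith [hupper x hx], by linarith [hlower x hx]⟩

/-- the two-sided bound `−C* ν_A(z)³ ≤ Im⟨F(z),Az⟩ ≤ −C_* ν_A(z)³`. -/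
theorem strict_dissipativity_bounds
    (l μ : Fin 3 → ℂ) (κ : Fin 3 → ℝ)
    (hl : ∀ j, l j ≠ 0) (hmu : ∀ j, μ j ≠ 0)
    (hdiss : ∀ j, (l j).im < 0)
    (hκ : ∀ j, 0 < κ j)
    (hcoef : (κ 0 : ℂ) * μ 0 + (κ 1 : ℂ) * μ 1 = (κ 2 : ℂ) * (starRingEnd ℂ) (μ 2)) :
    ∃ Cstar : ℝ, 0 < Cstar ∧ ∃ Clow : ℝ, 0 < Clow ∧
      ∀ z : Fin 3 → ℂ,
        -Cstar * nuA κ z ^ 3 ≤ (innC3 (Fnl l μ z) (Amul κ z)).im ∧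
        (innC3 (Fnl l μ z) (Amul κ z)).im ≤ -Clow * nuA κ z ^ 3 :=
  strict_dissipativity_bounds_general l μ κ hdiss hκ hcoef
end

section
/- Assume Im λ_j ≤ 0 for j = 1,2,3 and κ_1 μ_1 + κ_2 μ_2 = κ_3 conj(μ_3) with κ_1, κ_2, κ_3 > 0. Let α, r : [1,T] → ℂ³ be continuous with α continuously differentiable, satisfying i α'(t) = (1/t) F(α(t)) + r(t). Then d/dt ( ν_A(α(t))² ) ≤ 2 ν_A(r(t)) ν_A(α(t)) for all t ∈ [1,T]. -/
open MeasureTheory Filter Complex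

/-! Differentiating, `d/dt ν_A(α)² = 2 Re⟨Aα', α⟩ = 2 Im⟨A(iα'), α⟩`, which by the equation is
`(2/t) Im⟨AF(α), α⟩ + 2 Im⟨Ar, α⟩`. The condition `κ₁μ₁ + κ₂μ₂ = κ₃ conj μ₃` makes the coupling
terms of `⟨AF(z), z⟩` a sum `w + conj w`, so `Im⟨AF(z), z⟩ = Σ κⱼ |zⱼ|³ Im λⱼ ≤ 0`, and the
Cauchy–Schwarz inequality for the weighted inner product bounds `Im⟨Ar, α⟩` by `ν_A(r) ν_A(α)`. -/

/-- Where the derivative is not unique (e.g. on `Icc 1 1`), `derivWithin` is `0`. -/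
theorem derivWithin_le_of_hasDerivWithinAt {f : ℝ → ℝ} {f' c x : ℝ} {s : Set ℝ}
    (hf : HasDerivWithinAt f f' s x) (hf' : f' ≤ c) (hc : 0 ≤ c) :
    derivWithin f s x ≤ c := by
  by_cases hs : UniqueDiffWithinAt ℝ s x
  · rwa [hf.derivWithin hs]
  · rwa [derivWithin_zero_of_not_uniqueDiffWithinAt hs]

section WeightedNorm

variable {κ : Fin 3 → ℝ}

@[simp]
theorem Amul_add (v w : Fin 3 → ℂ) : Amul κ (v + w) = Amul κ v + Amul κ w := by
  ext j
  simp [Amul, mul_add]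

@[simp]
theorem Amul_smul (c : ℂ) (v : Fin 3 → ℂ) : Amul κ (c • v) = c • Amul κ v := by
  ext j
  simp only [Amul, Pi.smul_apply, smul_eq_mul]
  ring

@[simp]
theorem innC3_add_left (v w z : Fin 3 → ℂ) : innC3 (v + w) z = innC3 v z + innC3 w z := by
  simp [innC3, add_mul, Finset.sum_add_distrib]

@[simp]
theorem innC3_smul_left (c : ℂ) (v z : Fin 3 → ℂ) : innC3 (c • v) z = c * innC3 v z := by
  simp [innC3, Finset.mul_sum, mul_assoc]

theorem nuA_sq (hκ : ∀ j, 0 ≤ κ j) (z : Fin 3 → ℂ) : nuA κ z ^ 2 = ∑ j, κ j * ‖z j‖ ^ 2 :=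
  Real.sq_sqrt (Finset.sum_nonneg fun j _ => mul_nonneg (hκ j) (sq_nonneg _))

theorem norm_innC3_Amul_le (hκ : ∀ j, 0 ≤ κ j) (w z : Fin 3 → ℂ) :
    ‖innC3 (Amul κ w) z‖ ≤ nuA κ w * nuA κ z := by
  have hterm : ∀ j, ‖(κ j : ℂ) * w j * starRingEnd ℂ (z j)‖
      = √(κ j * ‖w j‖ ^ 2) * √(κ j * ‖z j‖ ^ 2) := by
    intro j
    rw [← Real.sqrt_mul (mul_nonneg (hκ j) (sq_nonneg _)),
      show κ j * ‖w j‖ ^ 2 * (κ j * ‖z j‖ ^ 2) = (κ j * ‖w j‖ * ‖z j‖) ^ 2 by ring,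
      Real.sqrt_sq (by have := hκ j; positivity)]
    simp [abs_of_nonneg (hκ j)]
  calc ‖innC3 (Amul κ w) z‖
      ≤ ∑ j, ‖(κ j : ℂ) * w j * starRingEnd ℂ (z j)‖ := norm_sum_le _ _
    _ = ∑ j, √(κ j * ‖w j‖ ^ 2) * √(κ j * ‖z j‖ ^ 2) := Finset.sum_congr rfl fun j _ => hterm j
    _ ≤ nuA κ w * nuA κ z :=
      Real.sum_sqrt_mul_sqrt_le _ (fun j => mul_nonneg (hκ j) (sq_nonneg _))
        (fun j => mul_nonneg (hκ j) (sq_nonneg _))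

theorem HasDerivWithinAt.nuA_sq (hκ : ∀ j, 0 ≤ κ j) {α : ℝ → Fin 3 → ℂ} {α' : Fin 3 → ℂ}
    {s : Set ℝ} {t : ℝ} (hα : HasDerivWithinAt α α' s t) :
    HasDerivWithinAt (fun τ => nuA κ (α τ) ^ 2) (2 * (innC3 (Amul κ α') (α t)).re) s t := by
  have hcomp : ∀ j, HasDerivWithinAt (fun τ => α τ j) (α' j) s t := hasDerivWithinAt_pi.mp hα
  simp only [_root_.nuA_sq hκ]
  refine (HasDerivWithinAt.fun_sum fun j _ => ((hcomp j).norm_sq).const_mul (κ j)).congr_deriv ?_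
  simp only [Complex.inner, mul_re, conj_re, conj_im, mul_neg, sub_neg_eq_add, innC3, Amul, re_sum,
    ofReal_re, ofReal_im, zero_mul, sub_zero, mul_im, add_zero, Finset.mul_sum]
  exact Finset.sum_congr rfl fun j _ => by ring

theorem im_innC3_Amul_Fnl {l μ : Fin 3 → ℂ}
    (hcoef : (κ 0 : ℂ) * μ 0 + (κ 1 : ℂ) * μ 1 = (κ 2 : ℂ) * (starRingEnd ℂ) (μ 2))
    (z : Fin 3 → ℂ) :
    (innC3 (Amul κ (Fnl l μ z)) z).im = ∑ j, κ j * ‖z j‖ ^ 3 * (l j).im := by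
  set W : ℂ := κ 2 * μ 2 * z 0 * z 1 * starRingEnd ℂ (z 2)
  have hnorm : ∀ w : ℂ, w * starRingEnd ℂ w = (‖w‖ : ℂ) ^ 2 := fun w => by
    rw [mul_conj, normSq_eq_norm_sq, ofReal_pow]
  have hdecomp : innC3 (Amul κ (Fnl l μ z)) z
      = ∑ j, ((κ j * ‖z j‖ ^ 3 : ℝ) : ℂ) * l j + (W + starRingEnd ℂ W) := by
    simp only [innC3, Amul, Fnl, Fin.sum_univ_three, Matrix.cons_val_zero, Matrix.cons_val_one,
      Matrix.cons_val_two, Matrix.head_cons, Matrix.tail_cons, W, map_mul, conj_ofReal,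
      conj_conj]
    push_cast
    linear_combination (starRingEnd ℂ (z 0) * starRingEnd ℂ (z 1) * z 2) * hcoef
      + (κ 0 * l 0 * ‖z 0‖ : ℂ) * hnorm (z 0) + (κ 1 * l 1 * ‖z 1‖ : ℂ) * hnorm (z 1)
      + (κ 2 * l 2 * ‖z 2‖ : ℂ) * hnorm (z 2)
  simp only [hdecomp, add_im, conj_im, add_neg_cancel, add_zero, im_sum, im_ofReal_mul]

theorem im_innC3_Amul_Fnl_nonpos {l μ : Fin 3 → ℂ} (hdiss : ∀ j, (l j).im ≤ 0)
    (hκ : ∀ j, 0 ≤ κ j)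
    (hcoef : (κ 0 : ℂ) * μ 0 + (κ 1 : ℂ) * μ 1 = (κ 2 : ℂ) * (starRingEnd ℂ) (μ 2))
    (z : Fin 3 → ℂ) :
    (innC3 (Amul κ (Fnl l μ z)) z).im ≤ 0 := by
  rw [im_innC3_Amul_Fnl hcoef]
  exact Finset.sum_nonpos fun j _ =>
    mul_nonpos_of_nonneg_of_nonpos (by have := hκ j; positivity) (hdiss j)

end WeightedNorm

theorem ode_dissipation_inequality_general
    (l μ : Fin 3 → ℂ) (κ : Fin 3 → ℝ)
    (hdiss : ∀ j, (l j).im ≤ 0)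
    (hκ : ∀ j, 0 < κ j)
    (hcoef : (κ 0 : ℂ) * μ 0 + (κ 1 : ℂ) * μ 1 = (κ 2 : ℂ) * (starRingEnd ℂ) (μ 2))
    (T : ℝ) (α α' r : ℝ → Fin 3 → ℂ)
    (hα : ∀ t ∈ Set.Icc (1 : ℝ) T, HasDerivWithinAt α (α' t) (Set.Icc 1 T) t)
    (heq : ∀ t ∈ Set.Icc (1 : ℝ) T,
      Complex.I • α' t = (1 / (t : ℂ)) • Fnl l μ (α t) + r t) :
    ∀ t ∈ Set.Icc (1 : ℝ) T,
      derivWithin (fun τ => nuA κ (α τ) ^ 2) (Set.Icc 1 T) t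
        ≤ 2 * nuA κ (r t) * nuA κ (α t) := by
  intro t ht
  have hκ0 : ∀ j, 0 ≤ κ j := fun j => (hκ j).le
  have ht_inv : 0 ≤ 1 / t := one_div_nonneg.mpr (zero_le_one.trans ht.1)
  refine derivWithin_le_of_hasDerivWithinAt ((hα t ht).nuA_sq hκ0) ?_
    (mul_nonneg (mul_nonneg zero_le_two (Real.sqrt_nonneg _)) (Real.sqrt_nonneg _))
  have hsplit : (innC3 (Amul κ (α' t)) (α t)).re
      = 1 / t * (innC3 (Amul κ (Fnl l μ (α t))) (α t)).im + (innC3 (Amul κ (r t)) (α t)).im := by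
    rw [← I_mul_im, ← innC3_smul_left, ← Amul_smul, ← smul_eq_mul, heq t ht]
    simp
  calc 2 * (innC3 (Amul κ (α' t)) (α t)).re
      = 2 * (1 / t * (innC3 (Amul κ (Fnl l μ (α t))) (α t)).im
          + (innC3 (Amul κ (r t)) (α t)).im) := by rw [hsplit]
    _ ≤ 2 * (0 + nuA κ (r t) * nuA κ (α t)) := by
      gcongr
      · exact mul_nonpos_of_nonneg_of_nonpos ht_inv (im_innC3_Amul_Fnl_nonpos hdiss hκ0 hcoef _)
      · exact (im_le_norm _).trans (norm_innC3_Amul_le hκ0 _ _)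
    _ = 2 * nuA κ (r t) * nuA κ (α t) := by ring

/-- the differential inequality `d/dt(ν_A(α)²) ≤ 2 ν_A(r) ν_A(α)`
for solutions of the perturbed reduced ODE system. -/
theorem ode_dissipation_inequality
    (l μ : Fin 3 → ℂ) (κ : Fin 3 → ℝ)
    (hl : ∀ j, l j ≠ 0) (hmu : ∀ j, μ j ≠ 0)
    (hdiss : ∀ j, (l j).im ≤ 0)
    (hκ : ∀ j, 0 < κ j)
    (hcoef : (κ 0 : ℂ) * μ 0 + (κ 1 : ℂ) * μ 1 = (κ 2 : ℂ) * (starRingEnd ℂ) (μ 2))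
    (T : ℝ) (α α' r : ℝ → Fin 3 → ℂ)
    (hr : ContinuousOn r (Set.Icc 1 T))
    (hα : ∀ t ∈ Set.Icc (1 : ℝ) T, HasDerivWithinAt α (α' t) (Set.Icc 1 T) t)
    (hα' : ContinuousOn α' (Set.Icc 1 T))
    (heq : ∀ t ∈ Set.Icc (1 : ℝ) T,
      Complex.I • α' t = (1 / (t : ℂ)) • Fnl l μ (α t) + r t) :
    ∀ t ∈ Set.Icc (1 : ℝ) T,
      derivWithin (fun τ => nuA κ (α τ) ^ 2) (Set.Icc 1 T) t
        ≤ 2 * nuA κ (r t) * nuA κ (α t) :=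
  ode_dissipation_inequality_general l μ κ hdiss hκ hcoef T α α' r hα heq
end
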